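/- If σ̃ < Φ̄, then the ODE ρ' = μρ[Φ(t)·tanh(ρ)/ρ − σ̃] has at least one positive T-periodic solution. -/

import Mathlib

open Set Real

lemma my_tanh_hasDerivAt (x : ℝ) : HasDerivAt Real.tanh (1 / Real.cosh x ^ 2) x := by
  have h := (Real.hasDerivAt_sinh x).fun_div (Real.hasDerivAt_cosh x) (Real.cosh_pos x).ne'
  have he : Real.tanh = fun y => Real.sinh y / Real.cosh y :=
    funext fun y => Real.tanh_eq_sinh_div_cosh y
  rw [he]
  refine h.congr_deriv ?_
  have := Real.cosh_sq_sub_sinh_sq x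
  congr 1
  nlinarith [Real.cosh_sq_sub_sinh_sq x]

lemma my_tanh_diff : Differentiable ℝ Real.tanh := fun x => (my_tanh_hasDerivAt x).differentiableAt

lemma my_tanh_cont : Continuous Real.tanh := my_tanh_diff.continuous

lemma my_tanh_deriv (x : ℝ) : deriv Real.tanh x = 1 / Real.cosh x ^ 2 :=
  (my_tanh_hasDerivAt x).deriv

lemma my_tanh_abs_le_one (x : ℝ) : |Real.tanh x| ≤ 1 := by
  rw [Real.tanh_eq_sinh_div_cosh, abs_div, abs_of_pos (Real.cosh_pos x),
    div_le_one (Real.cosh_pos x), abs_le]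
  constructor
  · nlinarith [Real.cosh_add_sinh x, Real.exp_pos x]
  · nlinarith [Real.cosh_sub_sinh x, Real.exp_pos (-x)]

lemma my_tanh_nonneg {x : ℝ} (hx : 0 ≤ x) : 0 ≤ Real.tanh x := by
  rw [Real.tanh_eq_sinh_div_cosh]
  exact div_nonneg (Real.sinh_nonneg_iff.2 hx) (Real.cosh_pos x).le

lemma my_tanh_le_self {x : ℝ} (hx : 0 ≤ x) : Real.tanh x ≤ x := by
  have hmono : Monotone (fun y => y - Real.tanh y) := by
    apply monotone_of_deriv_nonneg
    · exact differentiable_id.sub my_tanh_diff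
    · intro y
      rw [deriv_fun_sub (f := fun y => y) differentiableAt_id (my_tanh_diff y), deriv_id'', my_tanh_deriv]
      have h1 : (1:ℝ) ≤ Real.cosh y ^ 2 := by nlinarith [Real.one_le_cosh y]
      have : 1 / Real.cosh y ^ 2 ≤ 1 := by
        rw [div_le_one]; · exact h1
        · positivity
      linarith
  have := hmono hx
  simpa [Real.tanh_zero] using this

lemma my_tanh_sq_le_sq (x : ℝ) : Real.tanh x ^ 2 ≤ x ^ 2 := by
  rcases le_total 0 x with h | h
  · have h1 := my_tanh_le_self h
    have h2 := my_tanh_nonneg h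
    nlinarith
  · have h0 : 0 ≤ -x := by linarith
    have h1 := my_tanh_le_self h0
    have h2 := my_tanh_nonneg h0
    rw [Real.tanh_neg] at h1 h2
    nlinarith

lemma my_self_sub_le_tanh {x : ℝ} (hx : 0 ≤ x) : x - x ^ 3 / 3 ≤ Real.tanh x := by
  have hmono : Monotone (fun y => Real.tanh y - y + y ^ 3 / 3) := by
    apply monotone_of_deriv_nonneg
    · exact (my_tanh_diff.sub differentiable_id).add (by fun_prop)
    · intro y
      have hd : HasDerivAt (fun y : ℝ => Real.tanh y - y + y ^ 3 / 3)
          (1 / Real.cosh y ^ 2 - 1 + 3 * y ^ 2 / 3) y := by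
        exact ((my_tanh_hasDerivAt y).sub (hasDerivAt_id y)).add
          (((hasDerivAt_pow 3 y).div_const 3))
      rw [hd.deriv]
      have hc : Real.cosh y ^ 2 = Real.sinh y ^ 2 + 1 := Real.cosh_sq y
      have hcp : (0:ℝ) < Real.cosh y ^ 2 := by positivity
      have ht2 : Real.tanh y ^ 2 = Real.sinh y ^ 2 / Real.cosh y ^ 2 := by
        rw [Real.tanh_eq_sinh_div_cosh, div_pow]
      have h1 : 1 / Real.cosh y ^ 2 - 1 = -Real.tanh y ^ 2 := by
        rw [ht2]; field_simp; linarith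
      rw [h1]
      have := my_tanh_sq_le_sq y
      nlinarith
  have := hmono hx
  simp only [Real.tanh_zero] at this
  nlinarith [this]

lemma my_tanh_lipschitz : LipschitzWith 1 Real.tanh := by
  apply lipschitzWith_of_nnnorm_deriv_le my_tanh_diff
  intro x
  rw [← NNReal.coe_le_coe, coe_nnnorm, Real.norm_eq_abs, my_tanh_deriv, NNReal.coe_one, abs_le]
  have h1 : (1:ℝ) ≤ Real.cosh x ^ 2 := by nlinarith [Real.one_le_cosh x]
  have hcp : (0:ℝ) < Real.cosh x ^ 2 := by positivity
  have hp : (0:ℝ) < 1 / Real.cosh x ^ 2 := by positivity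
  constructor
  · linarith
  · rw [div_le_one hcp]; exact h1
open Set Real

lemma my_mono_aux {f F' : ℝ → ℝ} {c d : ℝ}
    (hf : ContinuousOn f (Icc c d))
    (hder : ∀ t ∈ Ioo c d, HasDerivAt f (F' t) t)
    (a : ℝ) (hsign : ∀ t ∈ Ioo c d, 0 ≤ F' t + a * f t) :
    MonotoneOn (fun t => f t * Real.exp (a * t)) (Icc c d) := by
  have hg : ∀ t ∈ Ioo c d, HasDerivAt (fun t => f t * Real.exp (a * t))
      ((F' t + a * f t) * Real.exp (a * t)) t := by
    intro t ht
    have he : HasDerivAt (fun t : ℝ => Real.exp (a * t)) (a * Real.exp (a * t)) t := by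
      have := (Real.hasDerivAt_exp (a * t)).comp t ((hasDerivAt_id t).const_mul a)
      simpa [mul_comm, Function.comp_def] using this
    have := (hder t ht).fun_mul he
    exact this.congr_deriv (by ring)
  apply monotoneOn_of_deriv_nonneg (convex_Icc c d)
  · exact hf.mul (Real.continuous_exp.comp (continuous_const.mul continuous_id)).continuousOn
  · intro t ht
    rw [interior_Icc] at ht
    exact (hg t ht).differentiableAt.differentiableWithinAt
  · intro t ht
    rw [interior_Icc] at ht
    rw [(hg t ht).deriv]
    exact mul_nonneg (hsign t ht) (Real.exp_pos _).le

lemma my_anti_aux {f F' : ℝ → ℝ} {c d : ℝ}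
    (hf : ContinuousOn f (Icc c d))
    (hder : ∀ t ∈ Ioo c d, HasDerivAt f (F' t) t)
    (a : ℝ) (hsign : ∀ t ∈ Ioo c d, F' t + a * f t ≤ 0) :
    AntitoneOn (fun t => f t * Real.exp (a * t)) (Icc c d) := by
  have := my_mono_aux (f := fun t => -f t) (F' := fun t => -F' t) (c := c) (d := d)
    hf.neg (fun t ht => (hder t ht).neg) a (fun t ht => by
      have := hsign t ht; linarith)
  intro u hu v hv huv
  have h2 := this hu hv huv
  simp only [neg_mul] at h2
  show f v * Real.exp (a * v) ≤ f u * Real.exp (a * u)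
  linarith

lemma my_exists_sol (F : ℝ → ℝ → ℝ) (T C : ℝ) (hT : 0 < T) (K : NNReal)
    (hcont : ∀ x, Continuous fun t => F t x)
    (hlip : ∀ t, LipschitzWith K (F t))
    (hbdd : ∀ t x, |F t x| ≤ C) (x₀ : ℝ) :
    ∃ f : ℝ → ℝ, f 0 = x₀ ∧ ∀ t ∈ Icc 0 T, HasDerivWithinAt f (F t (f t)) (Icc 0 T) t := by
  have hC : 0 ≤ C := le_trans (abs_nonneg _) (hbdd 0 0)
  have hpl : IsPicardLindelof F (tmin := 0) (tmax := T) ⟨0, le_refl 0, hT.le⟩ x₀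
      ⟨C * T, by positivity⟩ 0 ⟨C, hC⟩ K :=
    { lipschitzOnWith := fun t _ => (hlip t).lipschitzOnWith
      continuousOn := fun x _ => (hcont x).continuousOn
      norm_le := fun t _ x _ => by rw [Real.norm_eq_abs]; exact hbdd t x
      mul_max_le := by
        show C * max (T - 0) (0 - 0) ≤ C * T - 0
        rw [sub_zero, sub_zero, sub_zero, max_eq_left hT.le] }
  exact hpl.exists_eq_forall_mem_Icc_hasDerivWithinAt₀
set_option maxHeartbeats 1000000 in
theorem exists_positive_periodic_solution (μ σt T : ℝ)
    (hμ : 0 < μ) (hσt : 0 < σt) (hT : 0 < T)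
    (Φ : ℝ → ℝ) (hΦc : Continuous Φ) (hΦpos : ∀ t, 0 < Φ t)
    (hΦper : Function.Periodic Φ T)
    (hmean : σt < (1 / T) * ∫ t in (0:ℝ)..T, Φ t) :
    ∃ ρ : ℝ → ℝ,
      (∀ t, 0 < ρ t) ∧
      (∀ t, HasDerivAt ρ (μ * ρ t * (Φ t * (Real.tanh (ρ t) / ρ t) - σt)) t) ∧
      (∀ t, ρ (t + T) = ρ t) := by
  classical
  set I := ∫ t in (0:ℝ)..T, Φ t with hIdef
  have hIT : σt * T < I := by
    have h := (mul_lt_mul_of_pos_right hmean hT)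
    rw [one_div, inv_mul_eq_div, div_mul_cancel₀ _ hT.ne'] at h
    exact h
  have hI0 : 0 < I := lt_of_le_of_lt (by positivity) hIT
  -- global bound on Φ
  obtain ⟨tM, htM, hmax⟩ := isCompact_Icc.exists_isMaxOn (Set.nonempty_Icc.mpr hT.le)
    (hΦc.continuousOn : ContinuousOn Φ (Set.Icc 0 T))
  set M := Φ tM with hMdef
  have hM : 0 < M := hΦpos tM
  have hfr : ∀ t : ℝ, t - T * ⌊t / T⌋ ∈ Set.Ico 0 T := by
    intro t
    have h1 : t - T * ⌊t / T⌋ = T * Int.fract (t / T) := by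
      rw [Int.fract]; field_simp
    rw [h1]
    constructor
    · exact mul_nonneg hT.le (Int.fract_nonneg _)
    · calc T * Int.fract (t / T) < T * 1 := by
            exact (mul_lt_mul_iff_right₀ hT).2 (Int.fract_lt_one _)
        _ = T := mul_one T
  have hΦfr : ∀ t : ℝ, Φ (t - T * ⌊t / T⌋) = Φ t := by
    intro t
    rw [mul_comm]
    exact hΦper.sub_int_mul_eq ⌊t / T⌋
  have hΦM : ∀ t, Φ t ≤ M := by
    intro t
    rw [← hΦfr t]
    exact hmax (Set.Ico_subset_Icc_self (hfr t))
  -- the truncated vector field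
  set b := M / σt + 1 with hbdef
  have hb : 0 < b := by positivity
  have hbσ : σt * b = M + σt := by rw [hbdef]; field_simp
  set p : ℝ → ℝ := fun x => min (max x 0) b with hpdef
  have hp0 : ∀ x, 0 ≤ p x := fun x => le_min (le_max_right x 0) hb.le
  have hpb : ∀ x, p x ≤ b := fun x => min_le_right _ _
  have hp_id : ∀ x, 0 ≤ x → x ≤ b → p x = x := by
    intro x h0 h1
    show min (max x 0) b = x
    rw [max_eq_left h0, min_eq_left h1]
  have hple : ∀ x, 0 ≤ x → p x ≤ x := by
    intro x h0
    show min (max x 0) b ≤ x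
    exact (min_le_left _ _).trans (le_of_eq (max_eq_left h0))
  have hpge : ∀ x, b ≤ x → p x = b := by
    intro x h1
    show min (max x 0) b = b
    rw [max_eq_left (hb.le.trans h1)]
    exact min_eq_right h1
  have hp_lip : ∀ x y, |p x - p y| ≤ |x - y| := by
    intro x y
    show |min (max x 0) b - min (max y 0) b| ≤ |x - y|
    calc |min (max x 0) b - min (max y 0) b| ≤ max |max x 0 - max y 0| |b - b| :=
          abs_min_sub_min_le_max _ _ _ _
      _ = |max x 0 - max y 0| := by simp
      _ ≤ |x - y| := abs_max_sub_max_le_abs _ _ _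
  set F : ℝ → ℝ → ℝ := fun t x => μ * (Φ t * Real.tanh (p x) - σt * p x) with hFdef
  set C := μ * (M + σt * b) with hCdef
  set K : NNReal := Real.toNNReal (μ * (M + σt)) with hKdef
  have hKcoe : (K : ℝ) = μ * (M + σt) := Real.coe_toNNReal _ (by positivity)
  have hFbdd : ∀ t x, |F t x| ≤ C := by
    intro t x
    simp only [hFdef]
    rw [abs_mul, abs_of_pos hμ, hCdef]
    have h1 : |Φ t * Real.tanh (p x)| ≤ M := by
      rw [abs_mul, abs_of_pos (hΦpos t)]
      calc Φ t * |Real.tanh (p x)| ≤ M * 1 :=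
            mul_le_mul (hΦM t) (my_tanh_abs_le_one _) (abs_nonneg _) hM.le
        _ = M := mul_one M
    have h2 : |σt * p x| ≤ σt * b := by
      rw [abs_mul, abs_of_pos hσt, abs_of_nonneg (hp0 x)]
      exact mul_le_mul_of_nonneg_left (hpb x) hσt.le
    have h3 := abs_sub (Φ t * Real.tanh (p x)) (σt * p x)
    exact mul_le_mul_of_nonneg_left (by linarith) hμ.le
  have hFlip : ∀ t, LipschitzWith K (F t) := by
    intro t
    apply LipschitzWith.of_dist_le_mul
    intro x y
    rw [Real.dist_eq, Real.dist_eq, hKcoe]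
    simp only [hFdef]
    have htl : |Real.tanh (p x) - Real.tanh (p y)| ≤ |x - y| := by
      have := my_tanh_lipschitz.dist_le_mul (p x) (p y)
      rw [Real.dist_eq, Real.dist_eq, NNReal.coe_one, one_mul] at this
      exact this.trans (hp_lip x y)
    have hpl := hp_lip x y
    have heq : μ * (Φ t * Real.tanh (p x) - σt * p x) - μ * (Φ t * Real.tanh (p y) - σt * p y)
        = μ * (Φ t * (Real.tanh (p x) - Real.tanh (p y)) - σt * (p x - p y)) := by ring
    rw [heq, abs_mul, abs_of_pos hμ]
    have h4 : |Φ t * (Real.tanh (p x) - Real.tanh (p y)) - σt * (p x - p y)|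
        ≤ M * |x - y| + σt * |x - y| := by
      have h5 : |Φ t * (Real.tanh (p x) - Real.tanh (p y))| ≤ M * |x - y| := by
        rw [abs_mul, abs_of_pos (hΦpos t)]
        exact mul_le_mul (hΦM t) htl (abs_nonneg _) hM.le
      have h6 : |σt * (p x - p y)| ≤ σt * |x - y| := by
        rw [abs_mul, abs_of_pos hσt]
        exact mul_le_mul_of_nonneg_left hpl hσt.le
      have := abs_sub (Φ t * (Real.tanh (p x) - Real.tanh (p y))) (σt * (p x - p y))
      linarith
    calc μ * |Φ t * (Real.tanh (p x) - Real.tanh (p y)) - σt * (p x - p y)|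
        ≤ μ * (M * |x - y| + σt * |x - y|) := mul_le_mul_of_nonneg_left h4 hμ.le
      _ = μ * (M + σt) * |x - y| := by ring
  have hFcont : ∀ x, Continuous fun t => F t x := by
    intro x
    simp only [hFdef]
    fun_prop
  choose sol hsol0 hsolD using fun x₀ => my_exists_sol F T C hT K hFcont hFlip hFbdd x₀
  have hsolCont : ∀ x₀, ContinuousOn (sol x₀) (Set.Icc 0 T) :=
    fun x₀ t ht => (hsolD x₀ t ht).continuousWithinAt
  have hDint : ∀ x₀, ∀ t ∈ Set.Ioo (0:ℝ) T, HasDerivAt (sol x₀) (F t (sol x₀ t)) t :=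
    fun x₀ t ht => (hsolD x₀ t (Set.Ioo_subset_Icc_self ht)).hasDerivAt (Icc_mem_nhds ht.1 ht.2)
  have hDici : ∀ x₀, ∀ t ∈ Set.Ico (0:ℝ) T,
      HasDerivWithinAt (sol x₀) (F t (sol x₀ t)) (Set.Ici t) t := by
    intro x₀ t ht
    apply (hsolD x₀ t ⟨ht.1, ht.2.le⟩).mono_of_mem_nhdsWithin
    rw [mem_nhdsWithin]
    exact ⟨Set.Iio T, isOpen_Iio, ht.2, fun u hu => ⟨ht.1.trans hu.2, hu.1.le⟩⟩
  -- positivity of solutions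
  have hpos : ∀ x₀, 0 < x₀ → ∀ t ∈ Set.Icc 0 T, 0 < sol x₀ t := by
    intro x₀ hx₀
    by_contra hcon
    push_neg at hcon
    obtain ⟨t1, ht1, hft1⟩ := hcon
    have hSc : IsClosed (Set.Icc 0 T ∩ sol x₀ ⁻¹' Set.Iic 0) :=
      (hsolCont x₀).preimage_isClosed_of_isClosed isClosed_Icc isClosed_Iic
    have hne : (Set.Icc 0 T ∩ sol x₀ ⁻¹' Set.Iic 0).Nonempty := ⟨t1, ht1, hft1⟩
    have hbddS : BddBelow (Set.Icc 0 T ∩ sol x₀ ⁻¹' Set.Iic 0) := ⟨0, fun u hu => hu.1.1⟩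
    set s := sInf (Set.Icc 0 T ∩ sol x₀ ⁻¹' Set.Iic 0) with hsdef
    have hsS : s ∈ Set.Icc 0 T ∩ sol x₀ ⁻¹' Set.Iic 0 := hSc.csInf_mem hne hbddS
    have hs0le : 0 ≤ s := hsS.1.1
    have hsf : sol x₀ s ≤ 0 := hsS.2
    have hsne : s ≠ 0 := by
      intro h
      rw [h, hsol0] at hsf
      linarith
    have hs0 : 0 < s := hs0le.lt_of_ne (Ne.symm hsne)
    have hfpos' : ∀ u ∈ Set.Ico 0 s, 0 < sol x₀ u := by
      intro u hu
      by_contra hle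
      push_neg at hle
      have humem : u ∈ Set.Icc 0 T ∩ sol x₀ ⁻¹' Set.Iic 0 :=
        ⟨⟨hu.1, hu.2.le.trans hsS.1.2⟩, hle⟩
      exact absurd (csInf_le hbddS humem) (not_le.2 hu.2)
    have hmono := my_mono_aux (f := sol x₀) (F' := fun u => F u (sol x₀ u))
      ((hsolCont x₀).mono (Set.Icc_subset_Icc le_rfl hsS.1.2))
      (fun u hu => hDint x₀ u ⟨hu.1, lt_of_lt_of_le hu.2 hsS.1.2⟩)
      (μ * σt)
      (fun u hu => by
        have hfu : 0 < sol x₀ u := hfpos' u ⟨hu.1.le, hu.2⟩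
        have h1 : p (sol x₀ u) ≤ sol x₀ u := hple _ hfu.le
        have h2 : 0 ≤ Real.tanh (p (sol x₀ u)) := my_tanh_nonneg (hp0 _)
        have h3 : 0 < Φ u := hΦpos u
        simp only [hFdef]
        nlinarith [mul_nonneg h3.le h2, mul_pos hμ hσt])
    have hms := hmono (Set.left_mem_Icc.2 hs0.le) (Set.right_mem_Icc.2 hs0.le) hs0.le
    simp only [hsol0, mul_zero, Real.exp_zero, mul_one] at hms
    nlinarith [Real.exp_pos (μ * σt * s)]
  -- upper bound b is invariant
  have hub : ∀ x₀, 0 < x₀ → x₀ ≤ b → ∀ t ∈ Set.Icc 0 T, sol x₀ t ≤ b := by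
    intro x₀ hx₀ hxb
    by_contra hcon
    push_neg at hcon
    obtain ⟨t1, ht1, hft1⟩ := hcon
    have hsub : Set.Icc (0:ℝ) t1 ⊆ Set.Icc 0 T := Set.Icc_subset_Icc le_rfl ht1.2
    have hSc : IsClosed (Set.Icc 0 t1 ∩ sol x₀ ⁻¹' Set.Iic b) :=
      ((hsolCont x₀).mono hsub).preimage_isClosed_of_isClosed isClosed_Icc isClosed_Iic
    have hne : (Set.Icc 0 t1 ∩ sol x₀ ⁻¹' Set.Iic b).Nonempty :=
      ⟨0, ⟨le_rfl, ht1.1⟩, by rw [Set.mem_preimage, hsol0]; exact hxb⟩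
    have hbddS : BddAbove (Set.Icc 0 t1 ∩ sol x₀ ⁻¹' Set.Iic b) := ⟨t1, fun u hu => hu.1.2⟩
    set s := sSup (Set.Icc 0 t1 ∩ sol x₀ ⁻¹' Set.Iic b) with hsdef
    have hsS : s ∈ Set.Icc 0 t1 ∩ sol x₀ ⁻¹' Set.Iic b := hSc.csSup_mem hne hbddS
    have hsle : sol x₀ s ≤ b := hsS.2
    have hslt : s < t1 := lt_of_le_of_ne hsS.1.2 (by intro h; rw [h] at hsle; linarith)
    have hgt : ∀ u ∈ Set.Ioc s t1, b < sol x₀ u := by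
      intro u hu
      by_contra hb2
      push_neg at hb2
      have humem : u ∈ Set.Icc 0 t1 ∩ sol x₀ ⁻¹' Set.Iic b :=
        ⟨⟨hsS.1.1.trans hu.1.le, hu.2⟩, hb2⟩
      exact absurd (le_csSup hbddS humem) (not_le.2 hu.1)
    have hanti := my_anti_aux (f := sol x₀) (F' := fun u => F u (sol x₀ u))
      ((hsolCont x₀).mono (Set.Icc_subset_Icc hsS.1.1 ht1.2))
      (fun u hu => hDint x₀ u ⟨lt_of_le_of_lt hsS.1.1 hu.1, lt_of_lt_of_le hu.2 ht1.2⟩)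
      0
      (fun u hu => by
        have hfu : b < sol x₀ u := hgt u ⟨hu.1, hu.2.le⟩
        have hpu : p (sol x₀ u) = b := hpge _ hfu.le
        have h2 : Real.tanh b ≤ 1 := (abs_le.1 (my_tanh_abs_le_one b)).2
        have h3 : 0 ≤ Real.tanh b := my_tanh_nonneg hb.le
        have h4 : Φ u ≤ M := hΦM u
        have h5 : 0 < Φ u := hΦpos u
        simp only [hFdef]
        rw [hpu]
        have h6 : Φ u * Real.tanh b ≤ M := by nlinarith
        nlinarith [mul_pos hμ hσt])
    have hms := hanti (Set.left_mem_Icc.2 hslt.le) (Set.right_mem_Icc.2 hslt.le) hslt.le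
    simp only [zero_mul, Real.exp_zero, mul_one] at hms
    have := hgt t1 ⟨hslt, le_rfl⟩
    linarith
  -- exponential smallness bound
  have hsmall : ∀ x₀, 0 < x₀ → ∀ t ∈ Set.Icc 0 T, sol x₀ t ≤ x₀ * Real.exp (μ * M * t) := by
    intro x₀ hx₀ t ht
    have hanti := my_anti_aux (f := sol x₀) (F' := fun u => F u (sol x₀ u))
      (hsolCont x₀) (fun u hu => hDint x₀ u hu) (-(μ * M))
      (fun u hu => by
        have hfu : 0 < sol x₀ u := hpos x₀ hx₀ u (Set.Ioo_subset_Icc_self hu)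
        have h1 : p (sol x₀ u) ≤ sol x₀ u := hple _ hfu.le
        have h2 : Real.tanh (p (sol x₀ u)) ≤ p (sol x₀ u) := my_tanh_le_self (hp0 _)
        have h3 : 0 ≤ Real.tanh (p (sol x₀ u)) := my_tanh_nonneg (hp0 _)
        have h4 : Φ u ≤ M := hΦM u
        have h5 : 0 < Φ u := hΦpos u
        have h6 : Φ u * Real.tanh (p (sol x₀ u)) ≤ M * sol x₀ u := by nlinarith
        simp only [hFdef]
        nlinarith [mul_nonneg (mul_nonneg hμ.le hσt.le) (hp0 (sol x₀ u))])
    have hms := hanti (Set.left_mem_Icc.2 hT.le) ht ht.1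
    simp only [hsol0, mul_zero, Real.exp_zero, mul_one, neg_mul] at hms
    rw [Real.exp_neg] at hms
    have hepos : 0 < Real.exp (μ * M * t) := Real.exp_pos _
    rw [← div_eq_mul_inv] at hms
    calc sol x₀ t = sol x₀ t / Real.exp (μ * M * t) * Real.exp (μ * M * t) := by
          field_simp
      _ ≤ x₀ * Real.exp (μ * M * t) := mul_le_mul_of_nonneg_right hms hepos.le
  -- Poincaré map
  set P : ℝ → ℝ := fun x => sol x T with hPdef
  have hPb : P b ≤ b := hub b hb le_rfl T (Set.right_mem_Icc.2 hT.le)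
  have hPcont : Continuous P := by
    have hPdist : ∀ x y : ℝ, dist (P x) (P y) ≤ dist x y * Real.exp ((K:ℝ) * T) := by
      intro x y
      have hd0 : dist (sol x 0) (sol y 0) ≤ dist x y := by
        rw [hsol0, hsol0]
      have h := dist_le_of_trajectories_ODE (v := F) (K := K) hFlip
        (hsolCont x) (hDici x) (hsolCont y) (hDici y) hd0 T (Set.right_mem_Icc.2 hT.le)
      show dist (sol x T) (sol y T) ≤ dist x y * Real.exp ((K:ℝ) * T)
      simpa using h
    apply LipschitzWith.continuous (K := Real.toNNReal (Real.exp ((K:ℝ) * T)))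
    apply LipschitzWith.of_dist_le_mul
    intro x y
    rw [Real.coe_toNNReal _ (Real.exp_pos _).le]
    calc dist (P x) (P y) ≤ dist x y * Real.exp ((K:ℝ) * T) := hPdist x y
      _ = Real.exp ((K:ℝ) * T) * dist x y := mul_comm _ _
  -- choice of small initial value
  have hIσ : 0 < I - σt * T := by linarith
  set ε := Real.sqrt (3 * (I - σt * T) / (2 * I)) with hεdef
  have hε2 : ε ^ 2 = 3 * (I - σt * T) / (2 * I) := Real.sq_sqrt (by positivity)
  have hεpos : 0 < ε := Real.sqrt_pos.2 (by positivity)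
  set a0 := min b ε / 2 * Real.exp (-(μ * M * T)) with ha0def
  have hmin : 0 < min b ε := lt_min hb hεpos
  have ha0 : 0 < a0 := by positivity
  have hexple : Real.exp (-(μ * M * T)) ≤ 1 := Real.exp_le_one_iff.2 (by nlinarith [mul_pos (mul_pos hμ hM) hT])
  have ha0b : a0 ≤ b := by
    have h2 : a0 ≤ min b ε / 2 * 1 := mul_le_mul_of_nonneg_left hexple (half_pos hmin).le
    rw [mul_one] at h2
    exact h2.trans ((half_le_self hmin.le).trans (min_le_left _ _))
  have ha0P : a0 < P a0 := by
    have hfpos0 : ∀ t ∈ Set.Icc 0 T, 0 < sol a0 t := hpos a0 ha0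
    have hfb0 : ∀ t ∈ Set.Icc 0 T, sol a0 t ≤ b := hub a0 ha0 ha0b
    set s0 := min b ε / 2 with hs0def
    have hs0pos : 0 < s0 := half_pos hmin
    have hfs0 : ∀ t ∈ Set.Icc 0 T, sol a0 t ≤ s0 := by
      intro t ht
      have h1 := hsmall a0 ha0 t ht
      have h2 : Real.exp (-(μ * M * T)) * Real.exp (μ * M * t) ≤ 1 := by
        rw [← Real.exp_add]
        apply Real.exp_le_one_iff.2
        nlinarith [mul_nonneg (mul_nonneg hμ.le hM.le) (sub_nonneg.2 ht.2)]
      calc sol a0 t ≤ a0 * Real.exp (μ * M * t) := h1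
        _ = s0 * (Real.exp (-(μ * M * T)) * Real.exp (μ * M * t)) := by
            rw [ha0def]; ring
        _ ≤ s0 * 1 := mul_le_mul_of_nonneg_left h2 hs0pos.le
        _ = s0 := mul_one _
    set w : ℝ → ℝ := fun t => μ * (Φ t * (Real.tanh (sol a0 t) / sol a0 t) - σt) with hwdef
    have hvd : ∀ t ∈ Set.Ioo (0:ℝ) T, HasDerivAt (fun u => Real.log (sol a0 u)) (w t) t := by
      intro t ht
      have hft : 0 < sol a0 t := hfpos0 t (Set.Ioo_subset_Icc_self ht)
      have hd := (hDint a0 t ht).log hft.ne'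
      have hpid : p (sol a0 t) = sol a0 t :=
        hp_id _ hft.le (hfb0 t (Set.Ioo_subset_Icc_self ht))
      have heq2 : F t (sol a0 t) / sol a0 t = w t := by
        simp only [hFdef, hwdef, hpid]
        field_simp
      rw [heq2] at hd
      exact hd
    have hfcont0 := hsolCont a0
    have hlogcont : ContinuousOn (fun u => Real.log (sol a0 u)) (Set.Icc 0 T) :=
      hfcont0.log (fun t ht => (hfpos0 t ht).ne')
    have hwcont : ContinuousOn w (Set.Icc 0 T) := by
      simp only [hwdef]
      apply ContinuousOn.mul continuousOn_const
      apply ContinuousOn.sub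
      · apply ContinuousOn.mul hΦc.continuousOn
        exact (my_tanh_cont.comp_continuousOn hfcont0).div hfcont0
          (fun t ht => (hfpos0 t ht).ne')
      · exact continuousOn_const
    have hwint : IntervalIntegrable w MeasureTheory.volume 0 T := by
      apply ContinuousOn.intervalIntegrable
      rwa [Set.uIcc_of_le hT.le]
    have hFTC : ∫ t in (0:ℝ)..T, w t = Real.log (sol a0 T) - Real.log (sol a0 0) :=
      intervalIntegral.integral_eq_sub_of_hasDeriv_right_of_le hT.le hlogcont
        (fun t ht => (hvd t ht).hasDerivWithinAt) hwint
    have hΦint : IntervalIntegrable Φ MeasureTheory.volume 0 T := hΦc.intervalIntegrable 0 T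
    have hgint : IntervalIntegrable (fun t => μ * ((1 - s0 ^ 2 / 3) * Φ t - σt))
        MeasureTheory.volume 0 T :=
      ((hΦint.const_mul _).sub intervalIntegrable_const).const_mul _
    have hlo : ∀ t ∈ Set.Icc (0:ℝ) T, μ * ((1 - s0 ^ 2 / 3) * Φ t - σt) ≤ w t := by
      intro t ht
      have hft := hfpos0 t ht
      have hfs := hfs0 t ht
      have htl := my_self_sub_le_tanh hft.le
      have h1 : 1 - s0 ^ 2 / 3 ≤ Real.tanh (sol a0 t) / sol a0 t := by
        rw [le_div_iff₀ hft]
        have hx2 : sol a0 t ^ 2 ≤ s0 ^ 2 := by nlinarith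
        have h7 : 0 ≤ (s0 ^ 2 - sol a0 t ^ 2) * sol a0 t := mul_nonneg (by linarith) hft.le
        nlinarith [htl, h7]
      have h5 := hΦpos t
      simp only [hwdef]
      nlinarith [mul_le_mul_of_nonneg_left h1 h5.le]
    have hmono2 := intervalIntegral.integral_mono_on hT.le hgint hwint hlo
    have hlhs : ∫ t in (0:ℝ)..T, μ * ((1 - s0 ^ 2 / 3) * Φ t - σt)
        = μ * ((1 - s0 ^ 2 / 3) * I - σt * T) := by
      rw [hIdef]
      rw [intervalIntegral.integral_const_mul,
        intervalIntegral.integral_sub (hΦint.const_mul _) intervalIntegrable_const,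
        intervalIntegral.integral_const_mul, intervalIntegral.integral_const]
      simp only [smul_eq_mul, sub_zero]
      ring
    have hs0ε : s0 ≤ ε := by
      have h9 := min_le_right b ε
      rw [hs0def]
      linarith
    have hkey : 0 < (1 - s0 ^ 2 / 3) * I - σt * T := by
      have h1 : s0 ^ 2 ≤ ε ^ 2 := by nlinarith
      rw [hε2] at h1
      have h2 : s0 ^ 2 * (2 * I) ≤ 3 * (I - σt * T) := (le_div_iff₀ (by positivity)).1 h1
      nlinarith [hs0pos, hI0, hIσ]
    have hlog2 : Real.log (sol a0 0) < Real.log (sol a0 T) := by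
      have h0 : 0 < μ * ((1 - s0 ^ 2 / 3) * I - σt * T) := mul_pos hμ hkey
      have h3 : 0 < ∫ t in (0:ℝ)..T, w t := lt_of_lt_of_le (hlhs ▸ h0) hmono2
      linarith [hFTC, h3]
    have hfin := (Real.log_lt_log_iff (hfpos0 0 ⟨le_rfl, hT.le⟩)
      (hfpos0 T ⟨hT.le, le_rfl⟩)).1 hlog2
    rw [hsol0] at hfin
    exact hfin
  -- Brouwer (intermediate value) fixed point
  obtain ⟨x₀, hx₀mem, hx₀⟩ : ∃ x ∈ Set.Icc a0 b, P x - x = 0 := by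
    have hQc : ContinuousOn (fun x => P x - x) (Set.Icc a0 b) :=
      (hPcont.sub continuous_id).continuousOn
    have h0mem : (0:ℝ) ∈ Set.Icc (P b - b) (P a0 - a0) := ⟨by linarith, by linarith⟩
    obtain ⟨x, hx, hx0⟩ := intermediate_value_Icc' ha0b hQc h0mem
    exact ⟨x, hx, hx0⟩
  have hx₀fix : P x₀ = x₀ := by linarith [hx₀]
  have hx₀pos : 0 < x₀ := lt_of_lt_of_le ha0 hx₀mem.1
  -- the periodic solution
  set f : ℝ → ℝ := sol x₀ with hfdef
  have hf0 : f 0 = x₀ := hsol0 x₀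
  have hfT : f T = x₀ := hx₀fix
  have hfpos : ∀ t ∈ Set.Icc 0 T, 0 < f t := hpos x₀ hx₀pos
  have hfub : ∀ t ∈ Set.Icc 0 T, f t ≤ b := hub x₀ hx₀pos hx₀mem.2
  set ρ : ℝ → ℝ := fun t => f (t - T * ⌊t / T⌋) with hρdef
  have hρmem : ∀ t, 0 < ρ t ∧ ρ t ≤ b := fun t =>
    ⟨hfpos _ (Set.Ico_subset_Icc_self (hfr t)), hfub _ (Set.Ico_subset_Icc_self (hfr t))⟩
  have hρper : ∀ t, ρ (t + T) = ρ t := by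
    intro t
    simp only [hρdef]
    have h1 : (t + T) / T = t / T + 1 := by field_simp
    rw [h1, Int.floor_add_one]
    congr 1
    push_cast
    ring
  have hρeq : ∀ (k : ℤ) (t : ℝ), t ∈ Set.Icc ((k:ℝ) * T) ((k:ℝ) * T + T) → ρ t = f (t - k * T) := by
    intro k t ht
    rcases lt_or_eq_of_le ht.2 with hlt | heq
    · have hfl : ⌊t / T⌋ = k := by
        rw [Int.floor_eq_iff]
        constructor
        · rw [le_div_iff₀ hT]
          exact ht.1
        · rw [div_lt_iff₀ hT]
          nlinarith [ht.1]
      show f (t - T * (⌊t / T⌋ : ℝ)) = f (t - (k:ℝ) * T)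
      rw [hfl]
      congr 1
      ring
    · have hdiv : t / T = ((k + 1 : ℤ) : ℝ) := by
        push_cast
        rw [heq]
        field_simp
      have hfl : ⌊t / T⌋ = k + 1 := by rw [hdiv, Int.floor_intCast]
      show f (t - T * (⌊t / T⌋ : ℝ)) = f (t - (k:ℝ) * T)
      rw [hfl]
      have h2 : t - T * ((k + 1 : ℤ) : ℝ) = 0 := by push_cast; linarith [heq]
      have h3 : t - (k:ℝ) * T = T := by linarith [heq]
      rw [h2, h3, hf0, hfT]
  have hblock : ∀ (k : ℤ) (c : ℝ), c = (k:ℝ) * T → ∀ t ∈ Set.Icc c (c + T),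
      HasDerivWithinAt ρ (μ * (Φ t * Real.tanh (ρ t) - σt * ρ t)) (Set.Icc c (c + T)) t := by
    intro k c hc t ht
    subst hc
    have hmemIcc : t - (k:ℝ) * T ∈ Set.Icc 0 T := ⟨by linarith [ht.1], by linarith [ht.2]⟩
    have hinner : HasDerivWithinAt (fun s : ℝ => s - (k:ℝ) * T) 1
        (Set.Icc ((k:ℝ) * T) ((k:ℝ) * T + T)) t :=
      (hasDerivWithinAt_id t _).sub_const _
    have hmaps : Set.MapsTo (fun s : ℝ => s - (k:ℝ) * T)
        (Set.Icc ((k:ℝ) * T) ((k:ℝ) * T + T)) (Set.Icc 0 T) := by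
      intro s hs
      have h1 : (0:ℝ) ≤ s - (k:ℝ) * T := by linarith [hs.1]
      have h2 : s - (k:ℝ) * T ≤ T := by linarith [hs.2]
      exact ⟨h1, h2⟩
    have hcomp := (hsolD x₀ _ hmemIcc).comp t hinner hmaps
    rw [mul_one] at hcomp
    have hρt : ρ t = f (t - (k:ℝ) * T) := hρeq k t ht
    have hval : F (t - (k:ℝ) * T) (f (t - (k:ℝ) * T)) = μ * (Φ t * Real.tanh (ρ t) - σt * ρ t) := by
      have h1 : Φ (t - (k:ℝ) * T) = Φ t := hΦper.sub_int_mul_eq k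
      have h2 : p (ρ t) = ρ t := hp_id _ (hρmem t).1.le (hρmem t).2
      simp only [hFdef]
      rw [h1, ← hρt, h2]
    rw [hval] at hcomp
    exact hcomp.congr (fun s hs => hρeq k s hs) hρt
  refine ⟨ρ, fun t => (hρmem t).1, ?_, hρper⟩
  intro t
  have key : HasDerivAt ρ (μ * (Φ t * Real.tanh (ρ t) - σt * ρ t)) t := by
    set k := ⌊t / T⌋ with hk
    have hklT : (k:ℝ) * T ≤ t := by
      have := Int.floor_le (t / T)
      calc (k:ℝ) * T = (k:ℝ) * T := rfl
        _ ≤ t / T * T := by exact mul_le_mul_of_nonneg_right this hT.le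
        _ = t := by field_simp
    have htk1 : t < (k:ℝ) * T + T := by
      have := Int.lt_floor_add_one (t / T)
      have h2 : t / T * T < ((k:ℝ) + 1) * T := (mul_lt_mul_iff_left₀ hT).2 (by exact_mod_cast this)
      rw [div_mul_cancel₀ _ hT.ne'] at h2
      linarith
    rcases eq_or_lt_of_le hklT with heq | hlt
    · -- boundary case t = k * T
      have hc1 : ((k - 1 : ℤ) : ℝ) * T = (k:ℝ) * T - T := by push_cast; ring
      have h1 := hblock (k - 1) ((k:ℝ) * T - T) hc1.symm t
        ⟨by linarith, by rw [sub_add_cancel]; exact le_of_eq heq.symm⟩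
      have h2 := hblock k ((k:ℝ) * T) rfl t ⟨hklT, htk1.le⟩
      have hu := h1.union h2
      rw [sub_add_cancel, Set.Icc_union_Icc_eq_Icc (by linarith) (by linarith)] at hu
      exact hu.hasDerivAt (Icc_mem_nhds (by linarith) (by linarith))
    · exact (hblock k ((k:ℝ) * T) rfl t ⟨hklT, htk1.le⟩).hasDerivAt (Icc_mem_nhds hlt htk1)
  have hρne : ρ t ≠ 0 := (hρmem t).1.ne'
  convert key using 1
  field_simp
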